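/- arXiv:1601.04551 — 4 statements merged into one kernel-verified Lean document; each statement's English description precedes it below -/
import Mathlib

section
/- Let mu : G × H -> K be a graph homomorphism of graphs, let h0h1 be an edge of H, and suppose that for every odd closed walk C in G there exists an edge gg' on C such that mu(g,h0)mu(g',h0) is an edge of K and mu(g,h1)mu(g',h1) is an edge of K. Then there exists a graph homomorphism G -> K. -/
open SimpleGraph

variable {α β γ : Type*}

/-- Tensor (categorical) product of simple graphs. -/
def tensor (G : SimpleGraph α) (H : SimpleGraph β) : SimpleGraph (α × β) where
  Adj x y := G.Adj x.1 y.1 ∧ H.Adj x.2 y.2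
  symm := ⟨fun _ _ ⟨h1, h2⟩ => ⟨h1.symm, h2.symm⟩⟩
  loopless := ⟨fun x ⟨h1, _⟩ => G.loopless.irrefl x.1 h1⟩

/-- Projection of a walk in the tensor product to the first factor. -/
def projG {G : SimpleGraph α} {H : SimpleGraph β} :
    ∀ {x y : α × β}, (tensor G H).Walk x y → G.Walk x.1 y.1
  | _, _, SimpleGraph.Walk.nil => SimpleGraph.Walk.nil
  | _, _, SimpleGraph.Walk.cons h p => SimpleGraph.Walk.cons h.1 (projG p)

/-- Projection of a walk in the tensor product to the second factor. -/
def projH {G : SimpleGraph α} {H : SimpleGraph β} :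
    ∀ {x y : α × β}, (tensor G H).Walk x y → H.Walk x.2 y.2
  | _, _, SimpleGraph.Walk.nil => SimpleGraph.Walk.nil
  | _, _, SimpleGraph.Walk.cons h p => SimpleGraph.Walk.cons h.2 (projH p)

/-- One-step reduction: deleting a consecutive backtracking pair `e, e⁻¹`. -/
inductive RedStep (G : SimpleGraph α) : ∀ {u v : α}, G.Walk u v → G.Walk u v → Prop
  | cancel {u v a b : α} (h : G.Adj a b) (p : G.Walk u a) (q : G.Walk a v) :
      RedStep G (p.append (SimpleGraph.Walk.cons h (SimpleGraph.Walk.cons h.symm q)))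
        (p.append q)

/-- A walk is reduced if no backtracking cancellation applies to it. -/
def Reduced {G : SimpleGraph α} {u v : α} (W : G.Walk u v) : Prop :=
  ∀ W', ¬ RedStep G W W'

/-- Homotopy of walks: equivalence generated by cancellations. -/
def RedEquiv (G : SimpleGraph α) {u v : α} (W W' : G.Walk u v) : Prop :=
  Relation.EqvGen (fun p q => RedStep G p q) W W'

/-- One elementary step of square-equivalence. -/
inductive SqStep (G : SimpleGraph α) : ∀ {u v : α}, G.Walk u v → G.Walk u v → Prop
  | cancel {u v a b : α} (h : G.Adj a b) (p : G.Walk u a) (q : G.Walk a v) :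
      SqStep G (p.append (SimpleGraph.Walk.cons h (SimpleGraph.Walk.cons h.symm q)))
        (p.append q)
  | square {u v a b c d : α} (hab : G.Adj a b) (hbc : G.Adj b c) (had : G.Adj a d)
      (hdc : G.Adj d c) (p : G.Walk u a) (q : G.Walk c v) :
      SqStep G (p.append (SimpleGraph.Walk.cons hab (SimpleGraph.Walk.cons hbc q)))
        (p.append (SimpleGraph.Walk.cons had (SimpleGraph.Walk.cons hdc q)))

/-- Square-equivalence of walks. -/
def SqEquiv (G : SimpleGraph α) {u v : α} (W W' : G.Walk u v) : Prop :=
  Relation.EqvGen (fun p q => SqStep G p q) W W'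

/-- Natural-number power of a closed walk (iterated concatenation). -/
def wpow {G : SimpleGraph α} {u : α} (W : G.Walk u u) : ℕ → G.Walk u u
  | 0 => SimpleGraph.Walk.nil
  | n + 1 => W.append (wpow W n)

/-- Integer power of a closed walk. -/
def wzpow {G : SimpleGraph α} {u : α} (W : G.Walk u u) : ℤ → G.Walk u u
  | Int.ofNat n => wpow W n
  | Int.negSucc n => wpow W.reverse (n + 1)

/-- A walk `p` is a prefix of `q` (same starting vertex). -/
def WalkPrefix {G : SimpleGraph α} {u x y : α} (p : G.Walk u x) (q : G.Walk u y) : Prop :=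
  ∃ r : G.Walk x y, q = p.append r

/-- `K` is square-free: every square is trivial. -/
def SqFree (K : SimpleGraph γ) : Prop :=
  ∀ a b c d : γ, K.Adj a b → K.Adj b c → K.Adj c d → K.Adj d a → a = c ∨ b = d

/-- The circular clique `K_{p/q}` on `ZMod p`. -/
def circClique (p q : ℕ) : SimpleGraph (ZMod p) where
  Adj i j := i ≠ j ∧ ∃ k : ℕ, q ≤ k ∧ k ≤ p - q ∧ (j = i + (k : ZMod p) ∨ i = j + (k : ZMod p))
  symm := by
    constructor
    rintro i j ⟨hne, k, h1, h2, h3 | h3⟩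
    · exact ⟨hne.symm, k, h1, h2, Or.inr h3⟩
    · exact ⟨hne.symm, k, h1, h2, Or.inl h3⟩
  loopless := ⟨fun i h => h.1 rfl⟩

/-!
Delete from `G` every edge `gg'` whose two lifts `(g,h₀)(g',h₀)` and `(g,h₁)(g',h₁)` are both
mapped to edges by `μ`. By hypothesis every odd closed walk of `G` uses such an edge, so what
remains is bipartite. Choosing for each `g` the layer `δ g ∈ {h₀, h₁}` given by a 2-colouring
makes `g ↦ μ (g, δ g)` a homomorphism: across a remaining edge the layers differ, so
`(g, δ g)(g', δ g')` is an edge of `G × H` because `h₀h₁` is an edge of `H`; across a deleted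
edge both layers are mapped to edges of `K`.
-/

namespace SimpleGraph

variable {G : SimpleGraph α} {H : SimpleGraph β} {K : SimpleGraph γ}

lemma colorable_two_of_forall_odd_walk_exists_not_adj {G' : SimpleGraph α} (hle : G' ≤ G)
    (hodd : ∀ (u : α) (C : G.Walk u u), Odd C.length →
      ∃ i < C.length, ¬ G'.Adj (C.getVert i) (C.getVert (i + 1))) :
    G'.Colorable 2 := by
  refine two_colorable_iff_forall_loop_even.2 fun u C => Nat.not_odd_iff_even.1 fun hC => ?_
  obtain ⟨i, hi, hnadj⟩ := hodd u (C.mapLe hle) (by rwa [Walk.length_mapLe])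
  simp only [Walk.length_mapLe, Walk.mapLe, Walk.getVert_map, Hom.ofLE_apply] at hi hnadj
  exact hnadj (C.adj_getVert_succ hi)

def layerDefectGraph (G : SimpleGraph α) (μ : α × β → γ) (K : SimpleGraph γ) (h₀ h₁ : β) :
    SimpleGraph α :=
  G \ (K.comap (fun g => μ (g, h₀)) ⊓ K.comap (fun g => μ (g, h₁)))

lemma layerDefectGraph_adj {μ : α × β → γ} {h₀ h₁ : β} {g g' : α} :
    (G.layerDefectGraph μ K h₀ h₁).Adj g g' ↔ G.Adj g g' ∧
      ¬ (K.Adj (μ (g, h₀)) (μ (g', h₀)) ∧ K.Adj (μ (g, h₁)) (μ (g', h₁))) := Iff.rfl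

lemma layerDefectGraph_le (μ : α × β → γ) (h₀ h₁ : β) : G.layerDefectGraph μ K h₀ h₁ ≤ G :=
  sdiff_le

def Hom.ofLayerColoring (μ : tensor G H →g K) {h₀ h₁ : β} (hE : H.Adj h₀ h₁)
    (c : (G.layerDefectGraph μ K h₀ h₁).Coloring Bool) : G →g K where
  toFun g := μ (g, bif c g then h₁ else h₀)
  map_rel' {g g'} hgg' := by
    by_cases hc : c g = c g'
    · have hlayers := not_not.1 fun h => c.valid (layerDefectGraph_adj.2 ⟨hgg', h⟩) hc
      simp only [← hc]
      cases c g
      exacts [hlayers.1, hlayers.2]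
    · refine μ.map_adj ⟨hgg', ?_⟩
      cases hg : c g <;> cases hg' : c g' <;> simp_all [hE.symm]

end SimpleGraph

/-- if every odd closed walk of `G` has an edge `gg'` whose two copies
`(g,h0)(g',h0)` and `(g,h1)(g',h1)` map to edges of `K` under `mu : G × H → K`,
then `G` admits a homomorphism to `K`. -/
theorem hom_of_odd_walk_edges {G : SimpleGraph α} {H : SimpleGraph β} {K : SimpleGraph γ}
    (mu : tensor G H →g K) {h0 h1 : β} (hE : H.Adj h0 h1)
    (hodd : ∀ (u : α) (C : G.Walk u u), Odd C.length →
      ∃ i < C.length,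
        K.Adj (mu (C.getVert i, h0)) (mu (C.getVert (i + 1), h0)) ∧
        K.Adj (mu (C.getVert i, h1)) (mu (C.getVert (i + 1), h1))) :
    Nonempty (G →g K) := by
  have hbip : (G.layerDefectGraph mu K h0 h1).Colorable 2 :=
    colorable_two_of_forall_odd_walk_exists_not_adj (layerDefectGraph_le _ _ _)
      fun u C hC => (hodd u C hC).imp fun _ ⟨hi, hlayers⟩ =>
        ⟨hi, fun hadj => (layerDefectGraph_adj.1 hadj).2 hlayers⟩
  obtain ⟨c⟩ := hbip
  exact ⟨Hom.ofLayerColoring mu hE (recolorOfEquiv _ finTwoEquiv c)⟩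
end

section
/- Let K' be the Cayley graph of Z_{2p} with connection set {±1, ±3, ..., ±(p-2q)} (all odd residues of absolute value at most p-2q), where 2 < p/q < 4. Define, for a walk W in K' with consecutive vertices w_0, ..., w_n, the winding sum Δ(W) = Σ_i d(w_{i+1} - w_i), where d(x) is the unique representative of x mod 2p in {-(p-1), ..., p}. Then Δ is invariant under square-equivalence: if W ~ W' then Δ(W) = Δ(W'). Moreover Δ is additive under concatenation. -/
open SimpleGraph

variable {α β γ : Type*}

/-- The representative of `x : ZMod (2p)` in `{-(p-1), …, p}`. -/
def dd (p : ℕ) (x : ZMod (2 * p)) : ℤ :=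
  if (x.val : ℤ) ≤ (p : ℤ) then (x.val : ℤ) else (x.val : ℤ) - 2 * p

/-- The Cayley graph `K'` of `ZMod (2p)` with connection set the odd residues of
absolute value at most `p - 2q`. -/
def cayleyOdd (p q : ℕ) : SimpleGraph (ZMod (2 * p)) where
  Adj u v := u ≠ v ∧ ∃ s : ℤ, Odd s ∧ s.natAbs ≤ p - 2 * q ∧ v - u = (s : ZMod (2 * p))
  symm := by
    constructor
    rintro u v ⟨hne, s, hodd, habs, hs⟩
    refine ⟨hne.symm, -s, hodd.neg, by simpa using habs, ?_⟩
    push_cast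
    rw [← hs]; ring
  loopless := ⟨fun u h => h.1 rfl⟩

/-- The winding sum `Δ(W) = Σᵢ d(w_{i+1} - w_i)` of a walk in `K'`. -/
def winding (p q : ℕ) {u v : ZMod (2 * p)} (W : (cayleyOdd p q).Walk u v) : ℤ :=
  (W.darts.map (fun d => dd p (d.toProd.2 - d.toProd.1))).sum

/-
`dd p` is `ZMod.valMinAbs` on `ZMod (2 * p)`. An edge of `K'` has displacement of absolute value
at most `p - 2q`, so the displacement of a two-edge walk `a → b → c` has absolute value at most
`2 (p - 2q) < p`; being congruent to `c - a` modulo `2p`, it equals `dd p (c - a)`, which depends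
only on the ends. This gives invariance under square steps, and under cancellations since
`dd p 0 = 0`.
-/

lemma ZMod.valMinAbs_intCast_of_two_mul_natAbs_lt {n : ℕ} [NeZero n] {s : ℤ}
    (h : 2 * s.natAbs < n) : (s : ZMod n).valMinAbs = s :=
  (ZMod.valMinAbs_spec _ _).2 ⟨rfl, by constructor <;> omega⟩

lemma dd_eq_valMinAbs {p : ℕ} (hp : 0 < p) (x : ZMod (2 * p)) : dd p x = x.valMinAbs := by
  have : NeZero (2 * p) := ⟨by omega⟩
  rw [dd, ZMod.valMinAbs_def_pos, Nat.mul_div_cancel_left p two_pos]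
  simp only [Nat.cast_le, Nat.cast_mul, Nat.cast_ofNat]

@[simp]
lemma dd_zero (p : ℕ) : dd p 0 = 0 := by
  simp [dd]

lemma intCast_dd {p : ℕ} (hp : 0 < p) (x : ZMod (2 * p)) : ((dd p x : ℤ) : ZMod (2 * p)) = x := by
  rw [dd_eq_valMinAbs hp, ZMod.coe_valMinAbs]

section cayleyOdd

variable {p q : ℕ} {a b c : ZMod (2 * p)}

lemma two_mul_lt_of_cayleyOdd_adj (h : (cayleyOdd p q).Adj a b) : 2 * q < p := by
  obtain ⟨-, s, hodd, hs, -⟩ := h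
  have : s.natAbs ≠ 0 := Int.natAbs_ne_zero.2 (by rintro rfl; simp at hodd)
  omega

lemma natAbs_dd_sub_le_of_cayleyOdd_adj (hq : 0 < q) (h : (cayleyOdd p q).Adj a b) :
    (dd p (b - a)).natAbs ≤ p - 2 * q := by
  have hp := two_mul_lt_of_cayleyOdd_adj h
  have : NeZero (2 * p) := ⟨by omega⟩
  obtain ⟨-, s, -, hs, hba⟩ := h
  rwa [hba, dd_eq_valMinAbs (by omega), ZMod.valMinAbs_intCast_of_two_mul_natAbs_lt (by omega)]

lemma dd_add_dd_of_cayleyOdd_adj (h4 : p < 4 * q) (hab : (cayleyOdd p q).Adj a b)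
    (hbc : (cayleyOdd p q).Adj b c) : dd p (b - a) + dd p (c - b) = dd p (c - a) := by
  have hp : 0 < p := by have := two_mul_lt_of_cayleyOdd_adj hab; omega
  have : NeZero (2 * p) := ⟨by omega⟩
  have hab' := natAbs_dd_sub_le_of_cayleyOdd_adj (by omega) hab
  have hbc' := natAbs_dd_sub_le_of_cayleyOdd_adj (by omega) hbc
  have hcast : ((dd p (b - a) + dd p (c - b) : ℤ) : ZMod (2 * p)) = c - a := by
    push_cast
    rw [intCast_dd hp, intCast_dd hp]
    ring
  rw [dd_eq_valMinAbs hp (c - a), ← hcast,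
    ZMod.valMinAbs_intCast_of_two_mul_natAbs_lt (by omega)]

end cayleyOdd

section winding

variable {p q : ℕ} {u v w : ZMod (2 * p)}

@[simp]
lemma winding_cons (h : (cayleyOdd p q).Adj u v) (W : (cayleyOdd p q).Walk v w) :
    winding p q (Walk.cons h W) = dd p (v - u) + winding p q W := by
  simp [winding]

lemma winding_append (W : (cayleyOdd p q).Walk u v) (W' : (cayleyOdd p q).Walk v w) :
    winding p q (W.append W') = winding p q W + winding p q W' := by
  simp [winding, Walk.darts_append]

lemma winding_eq_of_sqStep (h4 : p < 4 * q) {W W' : (cayleyOdd p q).Walk u v}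
    (h : SqStep (cayleyOdd p q) W W') : winding p q W = winding p q W' := by
  cases h with
  | cancel hab =>
    have := dd_add_dd_of_cayleyOdd_adj h4 hab hab.symm
    simp only [winding_append, winding_cons, sub_self, dd_zero] at this ⊢
    omega
  | square hab hbc had hdc =>
    have h₁ := dd_add_dd_of_cayleyOdd_adj h4 hab hbc
    have h₂ := dd_add_dd_of_cayleyOdd_adj h4 had hdc
    simp only [winding_append, winding_cons]
    omega

end winding

theorem winding_invariant_general {p q : ℕ} (h4 : p < 4 * q) :
    (∀ (u v : ZMod (2 * p)) (W W' : (cayleyOdd p q).Walk u v),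
        SqEquiv (cayleyOdd p q) W W' → winding p q W = winding p q W') ∧
    (∀ (u v w : ZMod (2 * p)) (W : (cayleyOdd p q).Walk u v)
        (W' : (cayleyOdd p q).Walk v w),
        winding p q (W.append W') = winding p q W + winding p q W') :=
  ⟨fun _ _ _ _ h => Setoid.eqvGen_le (s := Setoid.ker (winding p q))
    (fun _ _ => winding_eq_of_sqStep h4) h, fun _ _ _ => winding_append⟩

/-- the winding sum `Δ` is invariant under square-equivalence and
additive under concatenation. -/
theorem winding_invariant {p q : ℕ} (hq : 0 < q) (h2 : 2 * q < p) (h4 : p < 4 * q) :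
    (∀ (u v : ZMod (2 * p)) (W W' : (cayleyOdd p q).Walk u v),
        SqEquiv (cayleyOdd p q) W W' → winding p q W = winding p q W') ∧
    (∀ (u v w : ZMod (2 * p)) (W : (cayleyOdd p q).Walk u v)
        (W' : (cayleyOdd p q).Walk v w),
        winding p q (W.append W') = winding p q W + winding p q W') :=
  winding_invariant_general h4
end

section
/- Odd cycles are multiplicative among circular cliques in the following density/limit sense: if chi_c(G) denotes the circular chromatic number and G × H -> K_{p/q} with p/q rational, 2 ≤ p/q < 4, and if for every rational p'/q' with p/q < p'/q' < 4 and p' odd we have G -> K_{p'/q'} or H -> K_{p'/q'}, then G -> K_{p/q} or H -> K_{p/q}. -/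
/-!
A homomorphism `G →g circClique P Q` places the vertices in `[0, P/Q]` so that adjacent
vertices are at distance at least `1` on the circle of circumference `P/Q`. The ratios
`(2p(n+1)+1)/(2q(n+1))` have odd numerators and decrease to `p/q`, so one of `G`, `H` maps to
infinitely many of the corresponding circular cliques. For that graph the placements, living in a
bounded subset of a finite-dimensional space, have a convergent subsequence; its limit is a
placement on the circle of circumference `p/q`, and rounding `⌊q x⌋` turns it into a
homomorphism to `circClique p q`. In other words, the circular chromatic number of a finite
graph is attained.
-/

open SimpleGraph

variable {α β γ : Type*}

open Filter Topology

/-- Positions on the real line read modulo `r`: for values in `[0, r]` the condition says that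
adjacent vertices are at distance at least `1` on the circle of circumference `r`. -/
def IsRealCircColoring (G : SimpleGraph α) (r : ℝ) (x : α → ℝ) : Prop :=
  ∀ ⦃u v⦄, G.Adj u v → 1 ≤ |x u - x v| ∧ |x u - x v| ≤ r - 1

lemma circClique_val_dist_of_eq_add {P Q k : ℕ} [NeZero P] (hQ : 0 < Q) (hk₁ : Q ≤ k)
    (hk₂ : k ≤ P - Q) {i j : ZMod P} (h : j = i + k) :
    Q ≤ |(i.val : ℤ) - j.val| ∧ |(i.val : ℤ) - j.val| ≤ P - Q := by
  have hkval : (k : ZMod P).val = k := ZMod.val_natCast_of_lt (by omega)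
  have hi := ZMod.val_lt i
  rcases lt_or_ge (i.val + k) P with hlt | hge
  · have hj : j.val = i.val + k := by rw [h, ZMod.val_add_of_lt (by omega), hkval]
    rw [abs_le, le_abs]
    omega
  · have hj : j.val = i.val + k - P := by rw [h, ZMod.val_add_of_le (by omega), hkval]
    rw [abs_le, le_abs]
    omega

lemma circClique_adj_val_dist {P Q : ℕ} [NeZero P] (hQ : 0 < Q) {i j : ZMod P}
    (h : (circClique P Q).Adj i j) :
    Q ≤ |(i.val : ℤ) - j.val| ∧ |(i.val : ℤ) - j.val| ≤ P - Q := by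
  obtain ⟨-, k, hk₁, hk₂, hij | hji⟩ := h
  · exact circClique_val_dist_of_eq_add hQ hk₁ hk₂ hij
  · rw [abs_sub_comm]
    exact circClique_val_dist_of_eq_add hQ hk₁ hk₂ hji

lemma exists_isRealCircColoring_of_hom {G : SimpleGraph α} {P Q : ℕ} [NeZero P] (hQ : 0 < Q)
    (f : G →g circClique P Q) :
    ∃ x : α → ℝ, (∀ v, x v ∈ Set.Icc 0 ((P : ℝ) / Q)) ∧ IsRealCircColoring G (P / Q) x := by
  have hQ' : (0 : ℝ) < Q := by exact_mod_cast hQ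
  refine ⟨fun v => (f v).val / Q, fun v => ⟨by positivity, ?_⟩, fun u v huv => ?_⟩
  · exact div_le_div_of_nonneg_right (by exact_mod_cast (ZMod.val_lt (f v)).le) hQ'.le
  · obtain ⟨h₁, h₂⟩ := circClique_adj_val_dist hQ (f.map_rel huv)
    have h₁' : (Q : ℝ) ≤ |((f u).val : ℝ) - (f v).val| := by exact_mod_cast h₁
    have h₂' : |((f u).val : ℝ) - (f v).val| ≤ P - Q := by exact_mod_cast h₂
    rw [← sub_div, abs_div, abs_of_pos hQ', le_div_iff₀ hQ', one_mul, div_sub_one hQ'.ne',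
      div_le_div_iff_of_pos_right hQ']
    exact ⟨h₁', h₂'⟩

section Floor

variable {R : Type*} [CommRing R] [LinearOrder R] [IsStrictOrderedRing R] [FloorRing R]

lemma abs_floor_sub_floor_sub_lt_one (s t : R) : |((⌊s⌋ - ⌊t⌋ : ℤ) : R) - (s - t)| < 1 := by
  rw [abs_lt]
  push_cast
  constructor <;> linarith [Int.floor_le s, Int.floor_le t, Int.sub_one_lt_floor s,
    Int.sub_one_lt_floor t]

lemma le_abs_floor_sub_floor {s t : R} {n : ℤ} (h : n ≤ |s - t|) : n ≤ |⌊s⌋ - ⌊t⌋| := by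
  have hround := abs_floor_sub_floor_sub_lt_one s t
  have : (n : R) - 1 < |((⌊s⌋ - ⌊t⌋ : ℤ) : R)| := by
    linarith [abs_sub_abs_le_abs_sub (s - t) ((⌊s⌋ - ⌊t⌋ : ℤ) : R),
      abs_sub_comm ((⌊s⌋ - ⌊t⌋ : ℤ) : R) (s - t)]
  rw [← Int.cast_abs] at this
  exact Int.le_of_sub_one_lt (by exact_mod_cast this)

lemma abs_floor_sub_floor_le {s t : R} {n : ℤ} (h : |s - t| ≤ n) : |⌊s⌋ - ⌊t⌋| ≤ n := by
  have hround := abs_floor_sub_floor_sub_lt_one s t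
  have : |((⌊s⌋ - ⌊t⌋ : ℤ) : R)| < n + 1 := by
    linarith [abs_sub_abs_le_abs_sub ((⌊s⌋ - ⌊t⌋ : ℤ) : R) (s - t)]
  rw [← Int.cast_abs] at this
  exact Int.lt_add_one_iff.mp (by exact_mod_cast this)

end Floor

lemma circClique_adj_intCast {p q : ℕ} (hq : 0 < q) {a b : ℤ} (h₁ : q ≤ |a - b|)
    (h₂ : |a - b| ≤ p - q) : (circClique p q).Adj (a : ZMod p) (b : ZMod p) := by
  have hk : (((a - b).natAbs : ℕ) : ℤ) = |a - b| := Int.natCast_natAbs _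
  refine ⟨fun hab => ?_, (a - b).natAbs, by omega, by omega, ?_⟩
  · have hdvd : (p : ℤ) ∣ a - b := (ZMod.intCast_eq_intCast_iff_dvd_sub b a p).mp hab.symm
    have := Int.eq_zero_of_abs_lt_dvd hdvd (by omega)
    omega
  · rcases abs_choice (a - b) with hab | hab
    · right
      rw [← Int.cast_natCast, hk, hab]
      push_cast; ring
    · left
      rw [← Int.cast_natCast, hk, hab]
      push_cast; ring

lemma nonempty_hom_circClique_of_isRealCircColoring {G : SimpleGraph α} {p q : ℕ} (hq : 0 < q)
    {x : α → ℝ} (hx : IsRealCircColoring G (p / q) x) : Nonempty (G →g circClique p q) := by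
  have hq' : (0 : ℝ) < q := by exact_mod_cast hq
  refine ⟨⟨fun v => ((⌊q * x v⌋ : ℤ) : ZMod p), fun {u v} huv => ?_⟩⟩
  obtain ⟨h₁, h₂⟩ := hx huv
  have hscale : |(q : ℝ) * x u - q * x v| = q * |x u - x v| := by
    rw [← mul_sub, abs_mul, abs_of_pos hq']
  apply circClique_adj_intCast hq
  · apply le_abs_floor_sub_floor
    rw [Int.cast_natCast, hscale]
    exact le_mul_of_one_le_right hq'.le h₁
  · apply abs_floor_sub_floor_le
    rw [hscale]
    push_cast
    calc (q : ℝ) * |x u - x v| ≤ q * (p / q - 1) := by gcongr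
      _ = p - q := by field_simp

lemma exists_isRealCircColoring_of_frequently [Fintype α] {G : SimpleGraph α} {r : ℕ → ℝ}
    {R : ℝ} (hr : Tendsto r atTop (𝓝 R))
    (h : ∃ᶠ n in atTop, ∃ x : α → ℝ, (∀ v, x v ∈ Set.Icc 0 (r n)) ∧ IsRealCircColoring G (r n) x) :
    ∃ x, IsRealCircColoring G R x := by
  obtain ⟨M, hM⟩ := hr.bddAbove_range
  obtain ⟨φ, hφ, hx⟩ := extraction_of_frequently_atTop h
  choose x hxbd hxcol using hx
  have hbd : ∀ n, x n ∈ Set.Icc (0 : α → ℝ) (fun _ => M) := fun n =>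
    ⟨fun v => (hxbd n v).1, fun v => (hxbd n v).2.trans (hM ⟨φ n, rfl⟩)⟩
  obtain ⟨y, -, ψ, hψ, hlim⟩ := tendsto_subseq_of_bounded (Metric.isBounded_Icc _ _) hbd
  have hrψ : Tendsto (fun k => r (φ (ψ k))) atTop (𝓝 R) :=
    hr.comp ((hφ.comp hψ).tendsto_atTop)
  refine ⟨y, fun u v huv => ?_⟩
  have hdist : Tendsto (fun k => |x (ψ k) u - x (ψ k) v|) atTop (𝓝 |y u - y v|) :=
    ((tendsto_pi_nhds.mp hlim u).sub (tendsto_pi_nhds.mp hlim v)).abs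
  exact ⟨ge_of_tendsto' hdist fun k => (hxcol (ψ k) huv).1,
    le_of_tendsto_of_tendsto' hdist (hrψ.sub_const 1) fun k => (hxcol (ψ k) huv).2⟩

lemma nonempty_hom_circClique_of_frequently [Fintype α] {G : SimpleGraph α} {p q : ℕ}
    (hq : 0 < q) {P Q : ℕ → ℕ} (hP : ∀ n, 0 < P n) (hQ : ∀ n, 0 < Q n)
    (hlim : Tendsto (fun n => (P n : ℝ) / Q n) atTop (𝓝 (p / q)))
    (h : ∃ᶠ n in atTop, Nonempty (G →g circClique (P n) (Q n))) :
    Nonempty (G →g circClique p q) := by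
  obtain ⟨x, hx⟩ := exists_isRealCircColoring_of_frequently hlim <| h.mono fun n ⟨f⟩ =>
    haveI : NeZero (P n) := ⟨(hP n).ne'⟩
    exists_isRealCircColoring_of_hom (hQ n) f
  exact nonempty_hom_circClique_of_isRealCircColoring hq hx

lemma tendsto_two_mul_succ_add_one_div {p q : ℕ} (hq : 0 < q) :
    Tendsto (fun n : ℕ => ((2 * p * (n + 1) + 1 : ℕ) : ℝ) / (2 * q * (n + 1) : ℕ)) atTop
      (𝓝 (p / q)) := by
  have h := ((tendsto_one_div_add_atTop_nhds_zero_nat (𝕜 := ℝ)).const_mul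
    (1 / (2 * q : ℝ))).const_add ((p : ℝ) / q)
  rw [mul_zero, add_zero] at h
  refine h.congr fun n => ?_
  have hq' : (q : ℝ) ≠ 0 := by exact_mod_cast hq.ne'
  push_cast
  field_simp

theorem circClique_limit_general {G : SimpleGraph α} {H : SimpleGraph β}
    [Fintype α] [Fintype β] {p q : ℕ} (hq : 0 < q) (h4 : p < 4 * q)
    (hdense : ∀ p' q' : ℕ, 0 < q' → Odd p' → p * q' < p' * q → p' < 4 * q' →
      Nonempty (G →g circClique p' q') ∨ Nonempty (H →g circClique p' q')) :
    Nonempty (G →g circClique p q) ∨ Nonempty (H →g circClique p q) := by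
  have hQ : ∀ n, 0 < 2 * q * (n + 1) := fun n => by positivity
  have hfreq : ∃ᶠ n in atTop,
      Nonempty (G →g circClique (2 * p * (n + 1) + 1) (2 * q * (n + 1))) ∨
      Nonempty (H →g circClique (2 * p * (n + 1) + 1) (2 * q * (n + 1))) :=
    Frequently.of_forall fun n => hdense _ _ (hQ n) ⟨p * (n + 1), by ring⟩ (by nlinarith)
      (by nlinarith)
  have hlim := tendsto_two_mul_succ_add_one_div (p := p) hq
  rcases frequently_or_distrib.mp hfreq with hG | hH
  · exact Or.inl (nonempty_hom_circClique_of_frequently hq (fun _ => Nat.succ_pos _) hQ hlim hG)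
  · exact Or.inr (nonempty_hom_circClique_of_frequently hq (fun _ => Nat.succ_pos _) hQ hlim hH)

/-- density/limit argument for circular cliques. If `G × H → K_{p/q}`
with `2 ≤ p/q < 4` and for every rational `p'/q'` with `p/q < p'/q' < 4` and `p'` odd
we have `G → K_{p'/q'}` or `H → K_{p'/q'}`, then `G → K_{p/q}` or `H → K_{p/q}`. -/
theorem circClique_limit {G : SimpleGraph α} {H : SimpleGraph β}
    [Fintype α] [Fintype β] {p q : ℕ} (hq : 0 < q) (h2 : 2 * q ≤ p) (h4 : p < 4 * q)
    (hmu : Nonempty (tensor G H →g circClique p q))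
    (hdense : ∀ p' q' : ℕ, 0 < q' → Odd p' → p * q' < p' * q → p' < 4 * q' →
      Nonempty (G →g circClique p' q') ∨ Nonempty (H →g circClique p' q')) :
    Nonempty (G →g circClique p q) ∨ Nonempty (H →g circClique p q) :=
  circClique_limit_general hq h4 hdense
end

section
/- Let mu : G × H -> K be a graph homomorphism with K square-free, G and H connected, G non-bipartite, and suppose mu has no H-extremal sets. If mu is constant on V(G) × {h} for some vertex h of H, then mu factors through the projection to H: there is a graph homomorphism gamma : H -> K with mu(g,h) = gamma(h) for all g, h. -/
open SimpleGraph

variable {α β γ : Type*}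

/-- `(S, h0h1)` is an `H`-extremal set for `mu : G × H → K`: `S ⊆ V(G) × {h1}` is a
nonempty monochromatic set whose neighborhood in `G × h0h1` is monochromatic and
whose second neighborhood is nonempty and avoids the color of `S`. -/
def HExtremal {G : SimpleGraph α} {H : SimpleGraph β} {K : SimpleGraph γ}
    (mu : tensor G H →g K) (h0 h1 : β) (S : Set α) : Prop :=
  H.Adj h0 h1 ∧ S.Nonempty ∧
  ∃ a b : γ,
    (∀ g ∈ S, mu (g, h1) = a) ∧
    (∀ g' ∈ {g' : α | ∃ g ∈ S, G.Adj g g'}, mu (g', h0) = b) ∧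
    ({x : α | x ∉ S ∧ ∃ g' ∈ {g' : α | ∃ g ∈ S, G.Adj g g'}, G.Adj g' x}).Nonempty ∧
    (∀ x ∈ {x : α | x ∉ S ∧ ∃ g' ∈ {g' : α | ∃ g ∈ S, G.Adj g g'}, G.Adj g' x},
      mu (x, h1) ≠ a)

/-! A column of `mu` that is not constant next to a constant column contains a
nonempty colour class `S` whose second neighbourhood leaves `S`, and the constant column makes
`(S, h0h1)` an `H`-extremal set. Hence constancy spreads from column to adjacent column, and
over the whole of the connected graph `H`; here `G` must be non-bipartite, because the colour
class is only forced to be closed under walks of even length. Once every column is constant,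
any edge of `G` shows that the column colours form a homomorphism `H → K`. -/

namespace SimpleGraph

variable {G : SimpleGraph α}

theorem exists_walk_length_odd_of_not_colorable_two (hG : ¬ G.Colorable 2) :
    ∃ u, ∃ w : G.Walk u u, Odd w.length := by
  simpa [two_colorable_iff_forall_loop_even] using hG

theorem exists_adj_of_not_colorable_two (hG : ¬ G.Colorable 2) : ∃ u v, G.Adj u v := by
  obtain ⟨u, w, hw⟩ := exists_walk_length_odd_of_not_colorable_two hG
  cases w with
  | nil => simp at hw
  | cons hadj _ => exact ⟨_, _, hadj⟩

theorem Preconnected.exists_walk_length_even (hG : G.Preconnected) (hGnb : ¬ G.Colorable 2)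
    (x y : α) : ∃ p : G.Walk x y, Even p.length := by
  obtain ⟨u, w, hw⟩ := exists_walk_length_odd_of_not_colorable_two hGnb
  obtain ⟨p⟩ := hG x u
  obtain ⟨q⟩ := hG u y
  by_cases hpq : Even (p.append q).length
  · exact ⟨_, hpq⟩
  · refine ⟨p.append (w.append q), ?_⟩
    simp only [Walk.length_append, ← Nat.not_odd_iff_even] at hpq hw ⊢
    grind

theorem Walk.mem_of_length_even {S : Set α}
    (hS : ∀ ⦃g g' x : α⦄, g ∈ S → G.Adj g g' → G.Adj g' x → x ∈ S) :
    ∀ {u v : α} (p : G.Walk u v), Even p.length → u ∈ S → v ∈ S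
  | _, _, .nil, _, hu => hu
  | _, _, .cons _ .nil, he, _ => by simp at he
  | _, _, .cons h (.cons h' q), he, hu =>
      q.mem_of_length_even hS (by simpa [Nat.even_add_one] using he) (hS hu h h')

end SimpleGraph

section ConstantColumns

variable {G : SimpleGraph α} {H : SimpleGraph β} {K : SimpleGraph γ} {mu : tensor G H →g K}

theorem const_column_of_adj (hG : G.Preconnected) (hGnb : ¬ G.Colorable 2)
    (hext : ∀ (h0 h1 : β) (S : Set α), ¬ HExtremal mu h0 h1 S) {h0 h1 : β} (hadj : H.Adj h0 h1)
    (hcol : ∀ g g' : α, mu (g, h1) = mu (g', h1)) (g g' : α) : mu (g, h0) = mu (g', h0) := by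
  set S : Set α := {x | mu (x, h0) = mu (g, h0)}
  have hclosed : ∀ ⦃x y z : α⦄, x ∈ S → G.Adj x y → G.Adj y z → z ∈ S := by
    intro x y z hx hxy hyz
    by_contra hz
    exact hext h1 h0 S ⟨hadj.symm, ⟨g, rfl⟩, mu (g, h0), mu (g, h1), fun _ hw => hw,
      fun w _ => hcol w g, ⟨z, hz, y, ⟨x, hx, hxy⟩, hyz⟩, fun _ hw => hw.1⟩
  obtain ⟨p, hp⟩ := hG.exists_walk_length_even hGnb g g'
  exact (p.mem_of_length_even hclosed hp rfl).symm

theorem const_column_of_walk (hG : G.Preconnected) (hGnb : ¬ G.Colorable 2)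
    (hext : ∀ (h0 h1 : β) (S : Set α), ¬ HExtremal mu h0 h1 S) {x y : β} (w : H.Walk x y)
    (hcol : ∀ g g' : α, mu (g, x) = mu (g', x)) (g g' : α) : mu (g, y) = mu (g', y) := by
  induction w with
  | nil => exact hcol g g'
  | cons hadj _ ih => exact ih (const_column_of_adj hG hGnb hext hadj.symm hcol)

theorem exists_hom_eq_of_const_columns (hedge : ∃ u v, G.Adj u v)
    (hcol : ∀ (hh : β) (g g' : α), mu (g, hh) = mu (g', hh)) :
    ∃ gamma : H →g K, ∀ (g : α) (hh : β), mu (g, hh) = gamma hh := by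
  obtain ⟨u, v, huv⟩ := hedge
  refine ⟨⟨fun hh => mu (u, hh), fun {a b} hab => ?_⟩, fun g hh => hcol hh g u⟩
  simpa only [hcol b v u] using mu.map_adj (show (tensor G H).Adj (u, a) (v, b) from ⟨huv, hab⟩)

end ConstantColumns

theorem constant_column_factors_general {G : SimpleGraph α} {H : SimpleGraph β} {K : SimpleGraph γ}
    (hG : G.Connected) (hH : H.Connected) (hGnb : ¬ G.Colorable 2)
    (mu : tensor G H →g K)
    (hext : ∀ (h0 h1 : β) (S : Set α), ¬ HExtremal mu h0 h1 S)
    (h : β) (hconst : ∀ g g' : α, mu (g, h) = mu (g', h)) :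
    ∃ gamma : H →g K, ∀ (g : α) (hh : β), mu (g, hh) = gamma hh :=
  exists_hom_eq_of_const_columns (exists_adj_of_not_colorable_two hGnb) fun hh =>
    const_column_of_walk hG.preconnected hGnb hext (hH h hh).some hconst

/-- if `K` is square-free, `G, H` connected, `G` non-bipartite, `mu` has
no `H`-extremal sets and is constant on some column `V(G) × {h}`, then `mu` factors
through the projection to `H`. -/
theorem constant_column_factors {G : SimpleGraph α} {H : SimpleGraph β} {K : SimpleGraph γ}
    (hK : SqFree K) (hG : G.Connected) (hH : H.Connected) (hGnb : ¬ G.Colorable 2)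
    (mu : tensor G H →g K)
    (hext : ∀ (h0 h1 : β) (S : Set α), ¬ HExtremal mu h0 h1 S)
    (h : β) (hconst : ∀ g g' : α, mu (g, h) = mu (g', h)) :
    ∃ gamma : H →g K, ∀ (g : α) (hh : β), mu (g, hh) = gamma hh :=
  constant_column_factors_general hG hH hGnb mu hext h hconst
end
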